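/- arXiv:1706.01174 — 2 statements merged into one kernel-verified Lean document; each statement's English description precedes it below -/
import Mathlib

section
/- Let h ∈ ℝ^K have distinct entries, τ = c0 h, and suppose the sorted-ascending vector satisfies h_a = -h_d (h is sign-symmetric as a multiset). Let s_i(θ) = log(p_i(θ)/(1-p_i(θ))) where p_i(θ) = q0 + (1-q0-q1)F((h_i θ - τ_i)/σ_w) with 0 < p_i < 1 and q0+q1 < 1. Then for θ2 = 2c0 - θ1, the multiset {s_i(θ2)} equals the multiset {s_i(θ1)}, and Σ_i log(1-p_i(θ2)) = Σ_i log(1-p_i(θ1)). -/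
/-- If τ = c0 h, the entries of h are distinct, and the sorted versions satisfy
h_a = -h_d (h is sign-symmetric as a multiset), then for θ2 = 2c0 - θ1 the
log-odds vector s(θ2) is a permutation (equal multiset) of s(θ1), and the sums
∑ log(1 - p_i) agree at θ1 and θ2. -/
theorem stmt_8 (K : ℕ) (h τ ha hd : Fin K → ℝ) (hinj : Function.Injective h)
    (πa πd : Equiv.Perm (Fin K))
    (hha : ∀ i, ha i = h (πa i)) (hhd : ∀ i, hd i = h (πd i))
    (hasc : StrictMono ha) (hdesc : StrictAnti hd) (hsym : ha = -hd)
    (c0 θ1 θ2 : ℝ) (hτ : ∀ i, τ i = c0 * h i) (hθ2 : θ2 = 2 * c0 - θ1)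
    (q0 q1 σw : ℝ) (hq : q0 + q1 < 1) (hσw : 0 < σw) (F : ℝ → ℝ)
    (p : ℝ → Fin K → ℝ)
    (hp : ∀ θ i, p θ i = q0 + (1 - q0 - q1) * F ((h i * θ - τ i) / σw))
    (hpb : ∀ θ i, 0 < p θ i ∧ p θ i < 1)
    (s : ℝ → Fin K → ℝ)
    (hs : ∀ θ i, s θ i = Real.log (p θ i / (1 - p θ i))) :
    (Finset.univ.val.map (fun i => s θ2 i) =
      Finset.univ.val.map (fun i => s θ1 i)) ∧
    ∑ i : Fin K, Real.log (1 - p θ2 i) = ∑ i : Fin K, Real.log (1 - p θ1 i) := by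

  -- permutation e with h (e i) = - h i
  set e : Equiv.Perm (Fin K) := πd.symm.trans πa with he
  have hneg : ∀ i, h (e i) = - h i := by
    intro i
    have := congrFun hsym (πd.symm i)
    simp [hha, hhd, Pi.neg_apply] at this
    simpa [he, Equiv.trans_apply] using this
  have hkey : ∀ i, p θ2 i = p θ1 (e i) := by
    intro i
    rw [hp, hp, hτ, hτ, hneg, hθ2]
    ring_nf
  constructor
  · have : (Finset.univ.val.map (fun i => s θ2 i)) =
        Finset.univ.val.map (fun i => s θ1 (e i)) := by
      apply Multiset.map_congr rfl
      intro i _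
      rw [hs, hs, hkey]
    rw [this]
    have : (fun i => s θ1 (e i)) = (fun i => s θ1 i) ∘ e := rfl
    rw [this, ← Multiset.map_map]
    congr 1
    have := Finset.map_univ_equiv e
    calc Finset.univ.val.map e = (Finset.univ.map e.toEmbedding).val := by
          simp [Finset.map]
      _ = Finset.univ.val := by rw [Finset.map_univ_equiv]
  · rw [← Equiv.sum_comp e (fun i => Real.log (1 - p θ1 i))]
    exact Finset.sum_congr rfl (fun i _ => by rw [hkey])
end

section
/- Let u, v, s, t ∈ ℝ^K with all of u, s having the same relative order as a vector h with distinct entries, and v, t having the same relative order as -h, and suppose v is a permutation of u and t is a permutation of s (as multisets). Then u^T s = v^T t. -/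
/-!
Sorting the coordinates along the common order `w` of `u` and `s` turns both into monotone
tuples, and sorting along the common order `w'` of `v` and `t` does the same for them. A
monotone rearrangement of a tuple is unique, so the sorted `v` is the sorted `u` and the sorted
`t` is the sorted `s`; both inner products are therefore the same sum over the sorted indices.
-/

/-- `u` has the same relative order as `v`. -/
def SameRelOrder {K : ℕ} (u v : Fin K → ℝ) : Prop :=
  ∀ i j : Fin K, u i ≤ u j ↔ v i ≤ v j

namespace SameRelOrder

variable {K : ℕ} {u v w w' : Fin K → ℝ}

lemma monotone_comp_sort (hu : SameRelOrder u w) : Monotone (u ∘ Tuple.sort w) :=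
  fun _ _ hij => (hu _ _).mpr (Tuple.monotone_sort w hij)

lemma comp_sort_eq_of_perm (hu : SameRelOrder u w) (hv : SameRelOrder v w')
    (σ : Equiv.Perm (Fin K)) (hσ : ∀ i, v i = u (σ i)) :
    v ∘ Tuple.sort w' = u ∘ Tuple.sort w := by
  have hv_eq : v ∘ Tuple.sort w' = u ∘ (σ * Tuple.sort w') := by
    funext i
    simp [hσ]
  rw [hv_eq]
  exact Tuple.unique_monotone (hv_eq ▸ hv.monotone_comp_sort) hu.monotone_comp_sort

theorem sum_mul_eq_of_perm {s t : Fin K → ℝ} (hu : SameRelOrder u w) (hs : SameRelOrder s w)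
    (hv : SameRelOrder v w') (ht : SameRelOrder t w')
    (σ : Equiv.Perm (Fin K)) (hσ : ∀ i, v i = u (σ i))
    (ρ : Equiv.Perm (Fin K)) (hρ : ∀ i, t i = s (ρ i)) :
    ∑ i, u i * s i = ∑ i, v i * t i := by
  have hvu := congrFun (comp_sort_eq_of_perm hu hv σ hσ)
  have hts := congrFun (comp_sort_eq_of_perm hs ht ρ hρ)
  calc ∑ i, u i * s i = ∑ i, u (Tuple.sort w i) * s (Tuple.sort w i) :=
        (Equiv.sum_comp _ fun i => u i * s i).symm
    _ = ∑ i, v (Tuple.sort w' i) * t (Tuple.sort w' i) :=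
        Finset.sum_congr rfl fun i _ => congrArg₂ (· * ·) (hvu i).symm (hts i).symm
    _ = ∑ i, v i * t i := Equiv.sum_comp _ fun i => v i * t i

end SameRelOrder

theorem stmt_10_general (K : ℕ) (h u v s t : Fin K → ℝ)
    (hu : SameRelOrder u h) (hs : SameRelOrder s h)
    (hv : SameRelOrder v (fun i => -h i)) (ht : SameRelOrder t (fun i => -h i))
    (hvu : ∃ σ : Equiv.Perm (Fin K), ∀ i, v i = u (σ i))
    (hts : ∃ ρ : Equiv.Perm (Fin K), ∀ i, t i = s (ρ i)) :
    ∑ i : Fin K, u i * s i = ∑ i : Fin K, v i * t i := by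
  obtain ⟨σ, hσ⟩ := hvu
  obtain ⟨ρ, hρ⟩ := hts
  exact hu.sum_mul_eq_of_perm hs hv ht σ hσ ρ hρ

/-- If u and s have the same relative order as h (with distinct entries),
v and t have the same relative order as -h, v is a permutation of u and t is
a permutation of s, then uᵀs = vᵀt. -/
theorem stmt_10 (K : ℕ) (h u v s t : Fin K → ℝ) (hinj : Function.Injective h)
    (hu : SameRelOrder u h) (hs : SameRelOrder s h)
    (hv : SameRelOrder v (fun i => -h i)) (ht : SameRelOrder t (fun i => -h i))
    (hvu : ∃ σ : Equiv.Perm (Fin K), ∀ i, v i = u (σ i))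
    (hts : ∃ ρ : Equiv.Perm (Fin K), ∀ i, t i = s (ρ i)) :
    ∑ i : Fin K, u i * s i = ∑ i : Fin K, v i * t i :=
  stmt_10_general K h u v s t hu hs hv ht hvu hts
end
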